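/- Let G and Q be groups with Q commutative, let f : ℤ → G and g : G → Q be group homomorphisms such that g is surjective and the kernel of g is contained in the range of f (i.e. the sequence ℤ → G → Q → 1 is exact). If the abelianization of G is trivial, then G is the trivial group. -/

import Mathlib

/-!
Since the abelianization of `G` is trivial, `G` is perfect, so every homomorphism from `G` to the
commutative group `Q` is trivial. Hence `G = ker g ⊆ range f` is a quotient of `ℤ`, so `G` is
commutative; a group that is both perfect and commutative is trivial.
-/

theorem commutator_eq_top_of_forall_abelianization_eq_one {G : Type*} [Group G]
    (hab : ∀ x : Abelianization G, x = 1) : commutator G = ⊤ := by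
  rw [← Abelianization.ker_of, MonoidHom.ker_eq_top_iff]
  exact MonoidHom.ext fun x => hab _

theorem MonoidHom.ker_eq_top_of_commutator_eq_top {G Q : Type*} [Group G] [CommGroup Q]
    (g : G →* Q) (hG : commutator G = ⊤) : g.ker = ⊤ :=
  top_le_iff.mp (hG ▸ Abelianization.commutator_subset_ker g)

theorem commutator_eq_bot_of_range_eq_top {A G : Type*} [CommGroup A] [Group G]
    (f : A →* G) (hf : f.range = ⊤) : commutator G = ⊥ := by
  rw [commutator_def, ← hf, ← map_commutator_eq, commutator_eq_bot, Subgroup.map_bot]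

theorem seifert_pi1_trivial_general {G Q : Type*} [Group G] [CommGroup Q]
    (f : Multiplicative ℤ →* G) (g : G →* Q)
    (hexact : g.ker ≤ f.range)
    (hab : ∀ x : Abelianization G, x = 1) :
    ∀ x : G, x = 1 := by
  have hperfect := commutator_eq_top_of_forall_abelianization_eq_one hab
  have hrange : f.range = ⊤ := top_le_iff.mp (g.ker_eq_top_of_commutator_eq_top hperfect ▸ hexact)
  have habelian := commutator_eq_bot_of_range_eq_top f hrange
  intro x
  exact Subgroup.mem_bot.mp (habelian ▸ hperfect.symm ▸ Subgroup.mem_top x)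

/-- If `ℤ → G → Q → 1` is exact with `Q` commutative and the abelianization of `G`
is trivial, then `G` is trivial. -/
theorem seifert_pi1_trivial {G Q : Type*} [Group G] [CommGroup Q]
    (f : Multiplicative ℤ →* G) (g : G →* Q)
    (hsurj : Function.Surjective g)
    (hexact : g.ker ≤ f.range)
    (hab : ∀ x : Abelianization G, x = 1) :
    ∀ x : G, x = 1 :=
  seifert_pi1_trivial_general f g hexact hab
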